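/- In the two-element Boolean matrix semantics, for every set Γ ∪ {B, C} of formulas in the pure biconditional language (connective ↔ only), Γ ∪ {B} ⊨ C if and only if Γ ⊨ C or Γ ⊨ B ↔ C. -/

import Mathlib

/-- Formulas of the pure biconditional language. -/
inductive IffFm where
  | var : ℕ → IffFm
  | iff : IffFm → IffFm → IffFm

/-- Two-valued evaluation, interpreting ↔ as equality on Bool. -/
def IffFm.eval (v : ℕ → Bool) : IffFm → Bool
  | .var n => v n
  | .iff A B => A.eval v == B.eval v

/-- Semantic consequence over the two-element Boolean matrix. -/
def IffSem (Γ : Set IffFm) (C : IffFm) : Prop :=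
  ∀ v : ℕ → Bool, (∀ A ∈ Γ, A.eval v = true) → C.eval v = true

/-!
`(Bool, ==)` is a group with neutral element `true`, and every formula evaluates as a group
homomorphism in its valuation. Hence the models of `Γ` are closed under pointwise `==`.
If `v₁ ⊨ Γ` refutes `C` and `v₂ ⊨ Γ` refutes `B ↔ C`, then `Γ ∪ {B} ⊨ C` forces `B` false at
both, so `C` is false at `v₁` and true at `v₂`; the model `v₁ == v₂` of `Γ` then makes `B` true
and `C` false.
-/

theorem IffFm.eval_beq (A : IffFm) (v w : ℕ → Bool) :
    A.eval (fun n => v n == w n) = (A.eval v == A.eval w) := by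
  induction A with
  | var n => rfl
  | iff P Q ihP ihQ =>
    simp only [IffFm.eval, ihP, ihQ]
    cases P.eval v <;> cases P.eval w <;> cases Q.eval v <;> cases Q.eval w <;> rfl

theorem forall_eval_beq_of_forall_eval {Γ : Set IffFm} {v w : ℕ → Bool}
    (hv : ∀ A ∈ Γ, A.eval v = true) (hw : ∀ A ∈ Γ, A.eval w = true) :
    ∀ A ∈ Γ, A.eval (fun n => v n == w n) = true := fun A hA => by
  rw [A.eval_beq, hv A hA, hw A hA]; rfl

theorem iffSem_union_singleton_iff {Γ : Set IffFm} {B C : IffFm} :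
    IffSem (Γ ∪ {B}) C ↔
      ∀ v, (∀ A ∈ Γ, A.eval v = true) → B.eval v = true → C.eval v = true := by
  simp only [IffSem, Set.union_singleton, Set.forall_mem_insert]
  exact forall_congr' fun v => ⟨fun h hΓ hB => h ⟨hB, hΓ⟩, fun h hBΓ => h hBΓ.2 hBΓ.1⟩

theorem bool_deduction_table (b₁ b₂ c₁ c₂ : Bool) (h₁ : b₁ = true → c₁ = true)
    (h₂ : b₂ = true → c₂ = true) (h₁₂ : (b₁ == b₂) = true → (c₁ == c₂) = true) :
    c₁ = true ∨ (b₂ == c₂) = true := by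
  revert h₁ h₂ h₁₂; cases b₁ <;> cases b₂ <;> cases c₁ <;> cases c₂ <;> decide

/-- Γ ∪ {B} ⊨ C iff Γ ⊨ C or Γ ⊨ B ↔ C, in the pure
biconditional language. -/
theorem stmt10 (Γ : Set IffFm) (B C : IffFm) :
    IffSem (Γ ∪ {B}) C ↔ (IffSem Γ C ∨ IffSem Γ (IffFm.iff B C)) := by
  rw [iffSem_union_singleton_iff]
  constructor
  · intro h
    by_contra! hfail
    simp only [IffSem, not_forall] at hfail
    obtain ⟨⟨v₁, hΓ₁, hC₁⟩, ⟨v₂, hΓ₂, hBC₂⟩⟩ := hfail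
    have h₁₂ := h _ (forall_eval_beq_of_forall_eval hΓ₁ hΓ₂)
    rw [B.eval_beq, C.eval_beq] at h₁₂
    rcases bool_deduction_table _ _ _ _ (h v₁ hΓ₁) (h v₂ hΓ₂) h₁₂ with hC | hBC
    · exact hC₁ hC
    · exact hBC₂ hBC
  · rintro (hC | hBC) v hΓ hB
    · exact hC v hΓ
    · simpa only [IffFm.eval, hB, Bool.true_beq] using hBC v hΓ
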